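/- Let (W_1, W_2) on K be a minimal regular unitary dilation of (T_1, T_2) on H, and S_1,…,S_d isometries on H such that (T_1, S_1,…,S_d) and (T_2, S_1,…,S_d) are doubly commuting. Then there exists a commuting tuple of isometries (U_1,…,U_d) on K such that (W_1, W_2, U_1,…,U_d) is an isometric dilation of (T_1, T_2, S_1,…,S_d); moreover each U_i is simultaneously an extension and a co-extension of S_i, i.e. U_i|_H = S_i and U_i* h = S_i* h for all h ∈ H, and each U_i commutes with W_1 and W_2. -/

import Mathlib

/-!
Since `(W₁, W₂)` is a minimal unitary dilation, the vectors `W^k ι h` (`k ∈ ℤ²`, `h ∈ H`) are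
total in `K`, and regularity says that their Gram matrix is
`⟪W^k ι h, W^l ι h'⟫ = ⟪h, M(l - k) h'⟫` with the moments `M(c) = T*^{c₋} T^{c₊}`.
An isometry `S` that doubly commutes with `T₁` and `T₂` commutes with every moment, so
`W^k ι h ↦ W^k ι (S h)` preserves the Gram matrix and extends to an isometry `U` of `K`.
By construction `U` commutes with `W₁, W₂` and extends `S`; testing `U* ι h` against the total
family shows that `U*` extends `S*`; and lifts of commuting isometries commute.
-/

open ContinuousLinearMap

/-- For commuting unitaries `W₁, W₂`, the operator `W^k = W₁^{k₁} W₂^{k₂}` for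
`k ∈ ℤ²`, written via positive and negative parts. -/
noncomputable def Wpow {K : Type*} [NormedAddCommGroup K] [InnerProductSpace ℂ K]
    [CompleteSpace K] (W₁ W₂ : K →L[ℂ] K) (a b : ℤ) : K →L[ℂ] K :=
  W₁ ^ a.toNat * (adjoint W₁) ^ (-a).toNat *
    (W₂ ^ b.toNat * (adjoint W₂) ^ (-b).toNat)

open scoped InnerProductSpace

section IsometricExtension

variable {𝕜 α K F : Type*} [RCLike 𝕜]
  [NormedAddCommGroup K] [InnerProductSpace 𝕜 K]
  [NormedAddCommGroup F] [InnerProductSpace 𝕜 F]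
  {v : α → K} {v' : α → F}

theorem norm_linearCombination_eq_of_inner_eq (hv : ∀ i j, ⟪v' i, v' j⟫_𝕜 = ⟪v i, v j⟫_𝕜)
    (c : α →₀ 𝕜) :
    ‖Finsupp.linearCombination 𝕜 v' c‖ = ‖Finsupp.linearCombination 𝕜 v c‖ := by
  simp only [@norm_eq_sqrt_re_inner 𝕜, Finsupp.linearCombination_apply, Finsupp.sum, sum_inner,
    inner_sum, inner_smul_left, inner_smul_right, hv]

theorem exists_adjoint_comp_self_eq_one_of_inner_eq [CompleteSpace K] [CompleteSpace F]
    (hv : ∀ i j, ⟪v' i, v' j⟫_𝕜 = ⟪v i, v j⟫_𝕜)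
    (hdense : Dense (Submodule.span 𝕜 (Set.range v) : Set K)) :
    ∃ U : K →L[𝕜] F, adjoint U ∘L U = 1 ∧ ∀ i, U (v i) = v' i := by
  set e := Finsupp.linearCombination 𝕜 v
  set f := Finsupp.linearCombination 𝕜 v'
  have he : DenseRange e := by
    rwa [DenseRange, ← LinearMap.coe_range, Finsupp.range_linearCombination]
  have hnorm := norm_linearCombination_eq_of_inner_eq hv
  have hbound : ∃ C, ∀ x, ‖f x‖ ≤ C * ‖e x‖ := ⟨1, fun x => by rw [hnorm, one_mul]⟩
  refine ⟨f.extendOfNorm e, ?_, fun i => ?_⟩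
  · rw [← norm_map_iff_adjoint_comp_self]
    refine he.induction ?_ (isClosed_eq (by fun_prop) continuous_norm)
    rintro _ ⟨x, rfl⟩
    rw [LinearMap.extendOfNorm_eq he hbound, hnorm]
  · simpa [e, f] using LinearMap.extendOfNorm_eq he hbound (Finsupp.single i 1)

end IsometricExtension

section Lifting

variable {G H K : Type*} [Group G]
  [NormedAddCommGroup H] [InnerProductSpace ℂ H]
  [NormedAddCommGroup K] [InnerProductSpace ℂ K] [CompleteSpace K]

def IsMinimalRep (V : G →* unitary (K →L[ℂ] K)) (ι : H →L[ℂ] K) : Prop :=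
  Dense (Submodule.span ℂ (Set.range fun p : G × H => (V p.1 : K →L[ℂ] K) (ι p.2)) : Set K)

def IsLift (V : G →* unitary (K →L[ℂ] K)) (ι : H →L[ℂ] K) (S : H →L[ℂ] H) (U : K →L[ℂ] K) :
    Prop :=
  ∀ g h, U ((V g : K →L[ℂ] K) (ι h)) = (V g : K →L[ℂ] K) (ι (S h))

variable {V : G →* unitary (K →L[ℂ] K)} {ι : H →L[ℂ] K}

theorem inner_unitary_apply_apply [CompleteSpace H] (g g' : G) (h h' : H) :
    ⟪(V g : K →L[ℂ] K) (ι h), (V g' : K →L[ℂ] K) (ι h')⟫_ℂ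
      = ⟪h, (adjoint ι ∘L (V (g⁻¹ * g') : K →L[ℂ] K) ∘L ι) h'⟫_ℂ := by
  rw [comp_apply, comp_apply, adjoint_inner_right, ← adjoint_inner_right, map_mul, map_inv,
    Submonoid.coe_mul, ← Unitary.star_eq_inv, Unitary.coe_star, star_eq_adjoint,
    mul_apply_eq_comp]

theorem inner_map_map_of_adjoint_comp_self [CompleteSpace H] {S : H →L[ℂ] H}
    (hS : adjoint S ∘L S = 1) (h h' : H) :
    ⟪S h, S h'⟫_ℂ = ⟪h, h'⟫_ℂ := by
  rw [← adjoint_inner_left, ← comp_apply, hS, one_apply_eq_self]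

theorem exists_isLift [CompleteSpace H] (hmin : IsMinimalRep V ι) {S : H →L[ℂ] H}
    (hS : adjoint S ∘L S = 1) (hSV : ∀ g, Commute S (adjoint ι ∘L (V g : K →L[ℂ] K) ∘L ι)) :
    ∃ U : K →L[ℂ] K, adjoint U ∘L U = 1 ∧ IsLift V ι S U := by
  have hgram : ∀ p q : G × H,
      ⟪(V p.1 : K →L[ℂ] K) (ι (S p.2)), (V q.1 : K →L[ℂ] K) (ι (S q.2))⟫_ℂ
        = ⟪(V p.1 : K →L[ℂ] K) (ι p.2), (V q.1 : K →L[ℂ] K) (ι q.2)⟫_ℂ := fun p q => by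
    rw [inner_unitary_apply_apply, inner_unitary_apply_apply, ← mul_apply_eq_comp,
      ← (hSV _).eq, mul_apply_eq_comp, inner_map_map_of_adjoint_comp_self hS]
  obtain ⟨U, hU, hUv⟩ := exists_adjoint_comp_self_eq_one_of_inner_eq hgram hmin
  exact ⟨U, hU, fun g h => hUv (g, h)⟩

namespace IsLift

variable {S S₁ S₂ : H →L[ℂ] H} {U U₁ U₂ : K →L[ℂ] K}

theorem comp_eq (hU : IsLift V ι S U) : U ∘L ι = ι ∘L S := by
  ext h
  simpa using hU 1 h

theorem commute_unitary (hmin : IsMinimalRep V ι) (hU : IsLift V ι S U) (g : G) :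
    Commute U (V g) := by
  refine ContinuousLinearMap.ext_on hmin ?_
  rintro _ ⟨⟨g', h⟩, rfl⟩
  rw [mul_apply_eq_comp, mul_apply_eq_comp, ← mul_apply_eq_comp (V g : K →L[ℂ] K),
    ← Submonoid.coe_mul, ← map_mul, hU, hU, map_mul, Submonoid.coe_mul, mul_apply_eq_comp]

theorem commute (hmin : IsMinimalRep V ι) (hU₁ : IsLift V ι S₁ U₁) (hU₂ : IsLift V ι S₂ U₂)
    (hS : Commute S₁ S₂) : Commute U₁ U₂ := by
  refine ContinuousLinearMap.ext_on hmin ?_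
  rintro _ ⟨⟨g, h⟩, rfl⟩
  simp only [mul_apply_eq_comp, hU₁ g, hU₂ g, ← mul_apply_eq_comp S₁, hS.eq]

theorem adjoint_apply [CompleteSpace H] (hmin : IsMinimalRep V ι)
    (hSV : ∀ g, Commute S (adjoint ι ∘L (V g : K →L[ℂ] K) ∘L ι)) (hU : IsLift V ι S U) (h : H) :
    adjoint U (ι h) = ι (adjoint S h) := by
  suffices innerSL ℂ (adjoint U (ι h)) = innerSL ℂ (ι (adjoint S h)) from
    ext_inner_right ℂ fun x => congr($this x)
  refine ContinuousLinearMap.ext_on hmin ?_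
  rintro _ ⟨⟨g, h'⟩, rfl⟩
  simp only [innerSL_apply_apply, adjoint_inner_left, hU g, ← adjoint_inner_right ι]
  exact congr(⟪h, $((hSV g).eq.symm) h'⟫_ℂ)

end IsLift

end Lifting

section CommutingUnitaries

variable {R : Type*} [Monoid R] [StarMul R]

theorem Unitary.coe_zpow_eq_pow_mul_star_pow (u : unitary R) (n : ℤ) :
    ((u ^ n : unitary R) : R) = (u : R) ^ n.toNat * star (u : R) ^ (-n).toNat := by
  cases n with
  | ofNat k => simp
  | negSucc k => simp [zpow_negSucc, ← Unitary.star_eq_inv, Unitary.coe_star, star_pow]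

theorem Unitary.coe_zpow_eq_star_pow_mul_pow (u : unitary R) (n : ℤ) :
    ((u ^ n : unitary R) : R) = star (u : R) ^ (-n).toNat * (u : R) ^ n.toNat := by
  cases n with
  | ofNat k => simp
  | negSucc k => simp [zpow_negSucc, ← Unitary.star_eq_inv, Unitary.coe_star, star_pow]

def unitaryPairHom (u₁ u₂ : unitary R) (hu : Commute u₁ u₂) :
    Multiplicative ℤ × Multiplicative ℤ →* unitary R :=
  (zpowersHom _ u₁).noncommCoprod (zpowersHom _ u₂) fun _ _ => hu.zpow_zpow _ _

variable (u₁ u₂ : unitary R) (hu : Commute u₁ u₂)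

theorem unitaryPairHom_apply (a b : ℤ) :
    unitaryPairHom u₁ u₂ hu (.ofAdd a, .ofAdd b) = u₁ ^ a * u₂ ^ b :=
  rfl

theorem coe_unitaryPairHom_apply (a b : ℤ) :
    (unitaryPairHom u₁ u₂ hu (.ofAdd a, .ofAdd b) : R)
      = star (u₁ : R) ^ (-a).toNat * star (u₂ : R) ^ (-b).toNat
          * ((u₁ : R) ^ a.toNat * (u₂ : R) ^ b.toNat) := by
  have hcomm : Commute ((u₁ : R) ^ a.toNat) (star (u₂ : R) ^ (-b).toNat) := by
    simpa [← Unitary.star_eq_inv, Unitary.coe_star] using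
      (hu.inv_right.pow_pow a.toNat (-b).toNat).map (unitary R).subtype
  rw [unitaryPairHom_apply, Submonoid.coe_mul, Unitary.coe_zpow_eq_star_pow_mul_pow,
    Unitary.coe_zpow_eq_star_pow_mul_pow, hcomm.mul_mul_mul_comm]

end CommutingUnitaries

section RegularDilation

variable {H K : Type*} [NormedAddCommGroup H] [InnerProductSpace ℂ H] [CompleteSpace H]
  [NormedAddCommGroup K] [InnerProductSpace ℂ K] [CompleteSpace K]

noncomputable def regularMoment (T₁ T₂ : H →L[ℂ] H) (a b : ℤ) : H →L[ℂ] H :=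
  adjoint T₁ ^ (-a).toNat * adjoint T₂ ^ (-b).toNat * (T₁ ^ a.toNat * T₂ ^ b.toNat)

theorem commute_regularMoment {S T₁ T₂ : H →L[ℂ] H} (h₁ : Commute S T₁)
    (h₁' : Commute S (adjoint T₁)) (h₂ : Commute S T₂) (h₂' : Commute S (adjoint T₂)) (a b : ℤ) :
    Commute S (regularMoment T₁ T₂ a b) :=
  ((h₁'.pow_right _).mul_right (h₂'.pow_right _)).mul_right
    ((h₁.pow_right _).mul_right (h₂.pow_right _))

theorem coe_unitaryPairHom_apply_eq_Wpow (u₁ u₂ : unitary (K →L[ℂ] K)) (hu : Commute u₁ u₂)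
    (a b : ℤ) :
    (unitaryPairHom u₁ u₂ hu (.ofAdd a, .ofAdd b) : K →L[ℂ] K) = Wpow u₁ u₂ a b := by
  rw [unitaryPairHom_apply, Submonoid.coe_mul, Unitary.coe_zpow_eq_pow_mul_star_pow,
    Unitary.coe_zpow_eq_pow_mul_star_pow, Wpow, star_eq_adjoint, star_eq_adjoint]

theorem exists_unitaryRep_of_regularDilation (ι : H →L[ℂ] K) {T₁ T₂ : H →L[ℂ] H}
    {W₁ W₂ : K →L[ℂ] K} (hW₁ : adjoint W₁ ∘L W₁ = 1 ∧ W₁ ∘L adjoint W₁ = 1)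
    (hW₂ : adjoint W₂ ∘L W₂ = 1 ∧ W₂ ∘L adjoint W₂ = 1) (hW : Commute W₁ W₂)
    (hreg : ∀ a b : ℤ, adjoint ι ∘L ((adjoint W₁) ^ (-a).toNat * (adjoint W₂) ^ (-b).toNat *
      (W₁ ^ a.toNat * W₂ ^ b.toNat)) ∘L ι = regularMoment T₁ T₂ a b)
    (hmin : (Submodule.span ℂ
        {x : K | ∃ (a b : ℤ) (h : H), x = Wpow W₁ W₂ a b (ι h)}).topologicalClosure = ⊤) :
    ∃ V : Multiplicative ℤ × Multiplicative ℤ →* unitary (K →L[ℂ] K),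
      (V (.ofAdd 1, 1) : K →L[ℂ] K) = W₁ ∧ (V (1, .ofAdd 1) : K →L[ℂ] K) = W₂ ∧
      IsMinimalRep V ι ∧
      ∀ g, adjoint ι ∘L (V g : K →L[ℂ] K) ∘L ι = regularMoment T₁ T₂ g.1.toAdd g.2.toAdd := by
  set u₁ : unitary (K →L[ℂ] K) := ⟨W₁, hW₁⟩
  set u₂ : unitary (K →L[ℂ] K) := ⟨W₂, hW₂⟩
  refine ⟨unitaryPairHom u₁ u₂ (Subtype.ext hW), ?_, ?_, ?_, fun g => ?_⟩
  · change ((u₁ ^ (1 : ℤ) * u₂ ^ (0 : ℤ) : unitary _) : K →L[ℂ] K) = W₁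
    simp [u₁]
  · change ((u₁ ^ (0 : ℤ) * u₂ ^ (1 : ℤ) : unitary _) : K →L[ℂ] K) = W₂
    simp [u₂]
  · rw [IsMinimalRep, Submodule.dense_iff_topologicalClosure_eq_top, ← hmin]
    congr!
    ext x
    constructor
    · rintro ⟨⟨⟨a, b⟩, h⟩, rfl⟩
      exact ⟨a.toAdd, b.toAdd, h, congr($(coe_unitaryPairHom_apply_eq_Wpow u₁ u₂ _ _ _) (ι h))⟩
    · rintro ⟨a, b, h, rfl⟩
      exact ⟨((.ofAdd a, .ofAdd b), h),
        congr($(coe_unitaryPairHom_apply_eq_Wpow u₁ u₂ _ a b) (ι h))⟩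
  · rw [← hreg]
    exact congr(adjoint ι ∘L $(coe_unitaryPairHom_apply u₁ u₂ _ g.1.toAdd g.2.toAdd) ∘L ι)

end RegularDilation

section IntertwiningProducts

variable {H K : Type*} [NormedAddCommGroup H] [NormedSpace ℂ H]
  [NormedAddCommGroup K] [NormedSpace ℂ K] {ι : H →L[ℂ] K}

theorem list_prod_map_comp_eq_comp_list_prod {β : Type*} {A : β → K →L[ℂ] K}
    {B : β → H →L[ℂ] H} (hAB : ∀ b, A b ∘L ι = ι ∘L B b) (l : List β) :
    (l.map A).prod ∘L ι = ι ∘L (l.map B).prod := by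
  induction l with
  | nil => rfl
  | cons b l ih =>
    rw [List.map_cons, List.prod_cons, List.map_cons, List.prod_cons, mul_def, mul_def,
      comp_assoc, ih, ← comp_assoc, hAB, comp_assoc]

theorem ofFn_prod_pow_comp_eq_comp_ofFn_prod_pow {d : ℕ} {U : Fin d → K →L[ℂ] K}
    {S : Fin d → H →L[ℂ] H} (hUS : ∀ i, U i ∘L ι = ι ∘L S i) (m : Fin d → ℕ) :
    (List.ofFn fun i => U i ^ m i).prod ∘L ι = ι ∘L (List.ofFn fun i => S i ^ m i).prod := by
  have hpow : ∀ i, (U i ^ m i) ∘L ι = ι ∘L (S i ^ m i) := fun i => by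
    simpa using list_prod_map_comp_eq_comp_list_prod (fun _ => hUS i) (List.replicate (m i) ())
  simpa only [List.ofFn_eq_map] using list_prod_map_comp_eq_comp_list_prod hpow (List.finRange d)

end IntertwiningProducts

theorem doubly_commuting_lifting_general {H K : Type*}
    [NormedAddCommGroup H] [InnerProductSpace ℂ H] [CompleteSpace H]
    [NormedAddCommGroup K] [InnerProductSpace ℂ K] [CompleteSpace K]
    (ι : H →L[ℂ] K)
    (T₁ T₂ : H →L[ℂ] H)
    (W₁ W₂ : K →L[ℂ] K)
    (hW₁ : adjoint W₁ ∘L W₁ = 1 ∧ W₁ ∘L adjoint W₁ = 1)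
    (hW₂ : adjoint W₂ ∘L W₂ = 1 ∧ W₂ ∘L adjoint W₂ = 1)
    (hW : Commute W₁ W₂)
    (hreg : ∀ a b : ℤ,
      adjoint ι ∘L ((adjoint W₁) ^ (-a).toNat * (adjoint W₂) ^ (-b).toNat *
          (W₁ ^ a.toNat * W₂ ^ b.toNat)) ∘L ι
        = (adjoint T₁) ^ (-a).toNat * (adjoint T₂) ^ (-b).toNat *
            (T₁ ^ a.toNat * T₂ ^ b.toNat))
    (hmin : (Submodule.span ℂ
        {x : K | ∃ (a b : ℤ) (h : H), x = Wpow W₁ W₂ a b (ι h)}).topologicalClosure = ⊤)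
    {d : ℕ} (S : Fin d → (H →L[ℂ] H))
    (hS : ∀ i, adjoint (S i) ∘L S i = 1)
    (hSS : ∀ i j, i ≠ j →
      S i * S j = S j * S i ∧ S i * adjoint (S j) = adjoint (S j) * S i)
    (hST₁ : ∀ i, T₁ * S i = S i * T₁ ∧ T₁ * adjoint (S i) = adjoint (S i) * T₁)
    (hST₂ : ∀ i, T₂ * S i = S i * T₂ ∧ T₂ * adjoint (S i) = adjoint (S i) * T₂) :
    ∃ U : Fin d → (K →L[ℂ] K),
      (∀ i, adjoint (U i) ∘L U i = 1) ∧
      (∀ i j, Commute (U i) (U j)) ∧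
      (∀ i, Commute (U i) W₁ ∧ Commute (U i) W₂) ∧
      (∀ (k₁ k₂ : ℕ) (m : Fin d → ℕ),
        adjoint ι ∘L (W₁ ^ k₁ * W₂ ^ k₂ * (List.ofFn fun i => U i ^ m i).prod) ∘L ι
          = T₁ ^ k₁ * T₂ ^ k₂ * (List.ofFn fun i => S i ^ m i).prod) ∧
      (∀ (i : Fin d) (h : H),
        U i (ι h) = ι (S i h) ∧ adjoint (U i) (ι h) = ι (adjoint (S i) h)) := by
  obtain ⟨V, hV₁, hV₂, hVmin, hVmoment⟩ :=
    exists_unitaryRep_of_regularDilation ι hW₁ hW₂ hW hreg hmin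
  have hSV : ∀ i g, Commute (S i) (adjoint ι ∘L (V g : K →L[ℂ] K) ∘L ι) := fun i g =>
    hVmoment g ▸ commute_regularMoment (hST₁ i).1.symm (Commute.star_left (hST₁ i).2).symm
      (hST₂ i).1.symm (Commute.star_left (hST₂ i).2).symm _ _
  choose U hUiso hU using fun i => exists_isLift hVmin (hS i) (hSV i)
  refine ⟨U, hUiso, fun i j => ?_, fun i => ⟨?_, ?_⟩, fun k₁ k₂ m => ?_,
    fun i h => ⟨congr($((hU i).comp_eq) h), (hU i).adjoint_apply hVmin (hSV i) h⟩⟩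
  · rcases eq_or_ne i j with rfl | hij
    · exact .refl _
    · exact (hU i).commute hVmin (hU j) (hSS i j hij).1
  · exact hV₁ ▸ (hU i).commute_unitary hVmin _
  · exact hV₂ ▸ (hU i).commute_unitary hVmin _
  · calc _ = (adjoint ι ∘L (W₁ ^ k₁ * W₂ ^ k₂) ∘L ι) * (List.ofFn fun i => S i ^ m i).prod := by
          simp only [mul_def, comp_assoc,
            ofFn_prod_pow_comp_eq_comp_ofFn_prod_pow fun i => (hU i).comp_eq]
      _ = _ := by simpa using congr($(hreg k₁ k₂) * (List.ofFn fun i => S i ^ m i).prod)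

/-- Let `(W₁, W₂)` on `K` be a minimal regular unitary dilation of `(T₁, T₂)` on `H`
(embedded via the isometry `ι`), and `S_1,…,S_d` isometries on `H` such that
`(T₁, S_1,…,S_d)` and `(T₂, S_1,…,S_d)` are doubly commuting. Then there is a commuting
tuple of isometries `(U_1,…,U_d)` on `K`, each commuting with `W₁` and `W₂`, such that
`(W₁, W₂, U_1,…,U_d)` is an isometric dilation of `(T₁, T₂, S_1,…,S_d)`, and each `U_i`
is both an extension and a co-extension of `S_i`. -/
theorem doubly_commuting_lifting {H K : Type*}
    [NormedAddCommGroup H] [InnerProductSpace ℂ H] [CompleteSpace H]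
    [NormedAddCommGroup K] [InnerProductSpace ℂ K] [CompleteSpace K]
    (ι : H →L[ℂ] K) (hι : adjoint ι ∘L ι = 1)
    (T₁ T₂ : H →L[ℂ] H) (hT₁ : ‖T₁‖ ≤ 1) (hT₂ : ‖T₂‖ ≤ 1) (hT : Commute T₁ T₂)
    (W₁ W₂ : K →L[ℂ] K)
    (hW₁ : adjoint W₁ ∘L W₁ = 1 ∧ W₁ ∘L adjoint W₁ = 1)
    (hW₂ : adjoint W₂ ∘L W₂ = 1 ∧ W₂ ∘L adjoint W₂ = 1)
    (hW : Commute W₁ W₂)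
    (hreg : ∀ a b : ℤ,
      adjoint ι ∘L ((adjoint W₁) ^ (-a).toNat * (adjoint W₂) ^ (-b).toNat *
          (W₁ ^ a.toNat * W₂ ^ b.toNat)) ∘L ι
        = (adjoint T₁) ^ (-a).toNat * (adjoint T₂) ^ (-b).toNat *
            (T₁ ^ a.toNat * T₂ ^ b.toNat))
    (hmin : (Submodule.span ℂ
        {x : K | ∃ (a b : ℤ) (h : H), x = Wpow W₁ W₂ a b (ι h)}).topologicalClosure = ⊤)
    {d : ℕ} (S : Fin d → (H →L[ℂ] H))
    (hS : ∀ i, adjoint (S i) ∘L S i = 1)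
    (hSS : ∀ i j, i ≠ j →
      S i * S j = S j * S i ∧ S i * adjoint (S j) = adjoint (S j) * S i)
    (hST₁ : ∀ i, T₁ * S i = S i * T₁ ∧ T₁ * adjoint (S i) = adjoint (S i) * T₁)
    (hST₂ : ∀ i, T₂ * S i = S i * T₂ ∧ T₂ * adjoint (S i) = adjoint (S i) * T₂) :
    ∃ U : Fin d → (K →L[ℂ] K),
      (∀ i, adjoint (U i) ∘L U i = 1) ∧
      (∀ i j, Commute (U i) (U j)) ∧
      (∀ i, Commute (U i) W₁ ∧ Commute (U i) W₂) ∧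
      (∀ (k₁ k₂ : ℕ) (m : Fin d → ℕ),
        adjoint ι ∘L (W₁ ^ k₁ * W₂ ^ k₂ * (List.ofFn fun i => U i ^ m i).prod) ∘L ι
          = T₁ ^ k₁ * T₂ ^ k₂ * (List.ofFn fun i => S i ^ m i).prod) ∧
      (∀ (i : Fin d) (h : H),
        U i (ι h) = ι (S i h) ∧ adjoint (U i) (ι h) = ι (adjoint (S i) h)) :=
  doubly_commuting_lifting_general ι T₁ T₂ W₁ W₂ hW₁ hW₂ hW hreg hmin S hS hSS hST₁ hST₂
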